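/- arXiv:2402.04462 — 2 statements merged into one kernel-verified Lean document; each statement's English description precedes it below -/
import Mathlib

section
/- Let u, x : Fin m → K satisfy F(u) = 0 and F(x) = 0, and set y := (∇F(x)·u) • u − (∇F(u)·x) • x. Then F(y) = 0. Moreover, if u and x are linearly independent over K and (∇F(u)·x, ∇F(x)·u) ≠ (0,0), then y ≠ 0. (This shows that the map τ_u is a well-defined morphism on X ∖ C_u with values in X, where C_u is the union of lines on X through [u]; the indeterminacy points of τ_u are contained in C_u, Corollary 3.6(b) of the paper.) -/
/-!
Restricted to the line through `u` and `x`, the cubic becomes the binary cubic form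
`F(s u + t x) = s³ F(u) + s² t ∇F(u)·x + s t² ∇F(x)·u + t³ F(x)`. The coefficients of `t³` and
`s t²` are the value and the derivative at `0` of the dehomogenization `t ↦ F(t u + x)`; those of
`s³` and `s² t` come in the same way from `t ↦ F(t x + u)`, because the two dehomogenizations of a
binary form have reversed coefficient sequences. When `F(u) = F(x) = 0` the form is
`s t (B s + A t)` with `A = ∇F(x)·u` and `B = ∇F(u)·x`, so it vanishes at `(s, t) = (A, -B)`, and
linear independence of `u, x` makes `A u - B x` nonzero unless `A = B = 0`.
-/

open scoped Polynomial
open Finset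

namespace MvPolynomial

variable {R σ : Type*} [CommSemiring R]

noncomputable def restrictLine (F : MvPolynomial σ R) (v w : σ → R) : MvPolynomial (Fin 2) R :=
  bind₁ (fun i => C (v i) * X 0 + C (w i) * X 1) F

theorem eval_restrictLine (F : MvPolynomial σ R) (v w : σ → R) (s t : R) :
    eval ![s, t] (F.restrictLine v w) = eval (s • v + t • w) F := by
  rw [← aeval_eq_eval, ← aeval_eq_eval, restrictLine, aeval_bind₁]
  congr
  funext i
  simp [mul_comm]

theorem IsHomogeneous.restrictLine {F : MvPolynomial σ R} {n : ℕ} (hF : F.IsHomogeneous n)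
    (v w : σ → R) : (F.restrictLine v w).IsHomogeneous n := by
  simpa [MvPolynomial.restrictLine] using hF.aeval _ fun i =>
    (isHomogeneous_C_mul_X (v i) 0).add (isHomogeneous_C_mul_X (w i) 1)

theorem aeval_X_one_restrictLine (F : MvPolynomial σ R) (v w : σ → R) :
    aeval ![Polynomial.X, 1] (F.restrictLine v w) =
      aeval (fun i => Polynomial.C (v i) * Polynomial.X + Polynomial.C (w i)) F := by
  rw [restrictLine, aeval_bind₁]
  congr
  funext i
  simp [Polynomial.C_eq_algebraMap]

theorem aeval_one_X_restrictLine (F : MvPolynomial σ R) (v w : σ → R) :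
    aeval ![1, Polynomial.X] (F.restrictLine v w) =
      aeval (fun i => Polynomial.C (w i) * Polynomial.X + Polynomial.C (v i)) F := by
  rw [restrictLine, aeval_bind₁]
  congr
  funext i
  simp [Polynomial.C_eq_algebraMap, add_comm]

theorem IsHomogeneous.aeval_eq_sum_antidiagonal {A : Type*} [CommSemiring A] [Algebra R A]
    {q : MvPolynomial (Fin 2) R} {n : ℕ} (hq : q.IsHomogeneous n) (a b : A) :
    MvPolynomial.aeval ![a, b] q = ∑ kl ∈ antidiagonal n,
      algebraMap R A ((MvPolynomial.aeval ![Polynomial.X, 1] q).coeff kl.1) *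
        (a ^ kl.1 * b ^ kl.2) := by
  conv_lhs => rw [← Polynomial.homogenize_eq_of_isHomogeneous hq rfl]
  simp [Polynomial.homogenize, aeval_monomial, Finsupp.update_eq_add_single]

theorem IsHomogeneous.coeff_aeval_one_X {q : MvPolynomial (Fin 2) R} {n : ℕ}
    (hq : q.IsHomogeneous n) {j : ℕ} (hj : j ≤ n) :
    (MvPolynomial.aeval ![(1 : R[X]), Polynomial.X] q).coeff j =
      (MvPolynomial.aeval ![Polynomial.X, 1] q).coeff (n - j) := by
  rw [hq.aeval_eq_sum_antidiagonal (1 : R[X]) Polynomial.X, Polynomial.finsetSum_coeff,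
    sum_eq_single_of_mem (n - j, j) (HasAntidiagonal.mem_antidiagonal.mpr (Nat.sub_add_cancel hj))]
  · simp [Polynomial.coeff_C_mul]
  · rintro ⟨k, l⟩ hkl hne
    rw [HasAntidiagonal.mem_antidiagonal] at hkl
    have hjl : j ≠ l := by
      rintro rfl
      exact hne (Prod.ext (by dsimp only at hkl ⊢; omega) rfl)
    simp [Polynomial.coeff_C_mul, Polynomial.coeff_X_pow, hjl]

theorem derivative_aeval [Fintype σ] (F : MvPolynomial σ R) (g : σ → R[X]) :
    Polynomial.derivative (aeval g F) =
      ∑ i, aeval g (pderiv i F) * Polynomial.derivative (g i) := by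
  induction F using MvPolynomial.induction_on with
  | C a => simp
  | add p q hp hq => simp [hp, hq, add_mul, Finset.sum_add_distrib]
  | mul_X p n hp =>
      classical
      simp only [map_mul, aeval_X, Polynomial.derivative_mul, hp, sum_mul, Derivation.leibniz,
        pderiv_X, Pi.single_apply, smul_eq_mul, mul_ite, mul_one, mul_zero, map_add, add_mul,
        sum_add_distrib, apply_ite (aeval g), map_zero, ite_mul, zero_mul, sum_ite_eq, mem_univ,
        if_true]
      rw [add_comm]
      congr 1
      exact sum_congr rfl fun i _ => by ring

theorem eval_zero_aeval_C_mul_X_add_C (F : MvPolynomial σ R) (a b : σ → R) :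
    (aeval (fun i => Polynomial.C (a i) * Polynomial.X + Polynomial.C (b i)) F).eval 0 =
      eval b F := by
  rw [← Polynomial.coe_aeval_eq_eval, ← AlgHom.comp_apply, comp_aeval]
  simp

theorem coeff_zero_aeval_C_mul_X_add_C (F : MvPolynomial σ R) (a b : σ → R) :
    (aeval (fun i => Polynomial.C (a i) * Polynomial.X + Polynomial.C (b i)) F).coeff 0 =
      eval b F := by
  rw [Polynomial.coeff_zero_eq_eval_zero, eval_zero_aeval_C_mul_X_add_C]

theorem coeff_one_aeval_C_mul_X_add_C [Fintype σ] (F : MvPolynomial σ R) (a b : σ → R) :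
    (aeval (fun i => Polynomial.C (a i) * Polynomial.X + Polynomial.C (b i)) F).coeff 1 =
      ∑ i, eval b (pderiv i F) * a i := by
  have h := congrArg (Polynomial.eval 0)
    (derivative_aeval F fun i => Polynomial.C (a i) * Polynomial.X + Polynomial.C (b i))
  rw [← Polynomial.coeff_zero_eq_eval_zero, Polynomial.coeff_derivative] at h
  simpa [Polynomial.eval_finsetSum, eval_zero_aeval_C_mul_X_add_C] using h

theorem IsHomogeneous.eval_smul_add_smul_of_three [Fintype σ] {F : MvPolynomial σ R}
    (hF : F.IsHomogeneous 3) (v w : σ → R) (s t : R) :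
    eval (s • v + t • w) F =
      s ^ 3 * eval v F + s ^ 2 * t * (∑ i, eval v (pderiv i F) * w i) +
        s * t ^ 2 * (∑ i, eval w (pderiv i F) * v i) + t ^ 3 * eval w F := by
  have hq := hF.restrictLine v w
  have hrev (j : ℕ) (hj : j ≤ 3) := hq.coeff_aeval_one_X hj
  simp only [aeval_one_X_restrictLine, aeval_X_one_restrictLine] at hrev
  rw [← eval_restrictLine, ← aeval_eq_eval, hq.aeval_eq_sum_antidiagonal,
    Nat.sum_antidiagonal_eq_sum_range_succ_mk]
  simp only [Algebra.algebraMap_self, RingHom.id_apply, aeval_X_one_restrictLine, sum_range_succ,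
    range_one, sum_singleton, pow_zero, pow_one, one_mul, mul_one, Nat.reduceSub,
    tsub_zero, tsub_self]
  rw [coeff_zero_aeval_C_mul_X_add_C, coeff_one_aeval_C_mul_X_add_C, ← hrev 0 (by norm_num),
    ← hrev 1 (by norm_num), coeff_zero_aeval_C_mul_X_add_C, coeff_one_aeval_C_mul_X_add_C]
  ring

end MvPolynomial

theorem tau_u_well_defined_general {K : Type*} [Field K] {m : ℕ}
    (F : MvPolynomial (Fin m) K) (hF : F.IsHomogeneous 3)
    (u x : Fin m → K)
    (hu : MvPolynomial.eval u F = 0) (hx : MvPolynomial.eval x F = 0) :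
    MvPolynomial.eval
        ((∑ i, MvPolynomial.eval x (MvPolynomial.pderiv i F) * u i) • u -
          (∑ i, MvPolynomial.eval u (MvPolynomial.pderiv i F) * x i) • x) F = 0 ∧
      (LinearIndependent K ![u, x] →
        ((∑ i, MvPolynomial.eval u (MvPolynomial.pderiv i F) * x i),
          (∑ i, MvPolynomial.eval x (MvPolynomial.pderiv i F) * u i)) ≠ (0, 0) →
        (∑ i, MvPolynomial.eval x (MvPolynomial.pderiv i F) * u i) • u -
          (∑ i, MvPolynomial.eval u (MvPolynomial.pderiv i F) * x i) • x ≠ 0) := by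
  set B := ∑ i, MvPolynomial.eval u (MvPolynomial.pderiv i F) * x i
  set A := ∑ i, MvPolynomial.eval x (MvPolynomial.pderiv i F) * u i
  have hy : A • u - B • x = A • u + (-B) • x := by rw [sub_eq_add_neg, neg_smul]
  refine ⟨?_, fun hli hAB hy0 => hAB ?_⟩
  · rw [hy, hF.eval_smul_add_smul_of_three, hu, hx]
    ring
  · obtain ⟨hA, hB⟩ := LinearIndependent.pair_iff.mp hli A (-B) (hy ▸ hy0)
    simp [neg_eq_zero.mp hB, hA]

/-- The map `τ_u` is well defined on `X ∖ C_u` with values in `X`: for `F(u) = F(x) = 0` and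
`y := (∇F(x)·u) • u − (∇F(u)·x) • x`, one has `F(y) = 0`; and `y ≠ 0` when `u, x` are
linearly independent and `(∇F(u)·x, ∇F(x)·u) ≠ (0,0)`. -/
theorem tau_u_well_defined {K : Type*} [Field K] [CharZero K] {m : ℕ} (hm : 1 ≤ m)
    (F : MvPolynomial (Fin m) K) (hF : F.IsHomogeneous 3)
    (u x : Fin m → K)
    (hu : MvPolynomial.eval u F = 0) (hx : MvPolynomial.eval x F = 0) :
    MvPolynomial.eval
        ((∑ i, MvPolynomial.eval x (MvPolynomial.pderiv i F) * u i) • u -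
          (∑ i, MvPolynomial.eval u (MvPolynomial.pderiv i F) * x i) • x) F = 0 ∧
      (LinearIndependent K ![u, x] →
        ((∑ i, MvPolynomial.eval u (MvPolynomial.pderiv i F) * x i),
          (∑ i, MvPolynomial.eval x (MvPolynomial.pderiv i F) * u i)) ≠ (0, 0) →
        (∑ i, MvPolynomial.eval x (MvPolynomial.pderiv i F) * u i) • u -
          (∑ i, MvPolynomial.eval u (MvPolynomial.pderiv i F) * x i) • x ≠ 0) :=
  tau_u_well_defined_general F hF u x hu hx
end

section
/- Let u, x, x' : Fin m → K satisfy F(u) = F(x) = F(x') = 0, with u, x linearly independent and u, x' linearly independent over K, and suppose ∇F(u)·x ≠ 0 and ∇F(x)·u ≠ 0. If there exists c ∈ K, c ≠ 0, such that (∇F(x')·u) • u − (∇F(u)·x') • x' = c • ((∇F(x)·u) • u − (∇F(u)·x) • x), then there exists d ∈ K, d ≠ 0, with x' = d • x. (Lemma 3.5 / Corollary 3.6(c) of the paper: the involution τ_u acts injectively, indeed freely, on X ∖ (S_u ∪ S_u*).) -/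
/-!
Solving `τ_u(x') = c • τ_u(x)` for `x'` shows that `x'` lies in the plane spanned by `u` and `x`,
say `x' = a • u + b • x`: the coefficient `∇F(u)·x'` of `x'` cannot vanish, since then `u` and `x`
would satisfy a relation whose `x`-coefficient is `c (∇F(u)·x) ≠ 0`. On that plane `τ_u` is
explicit: as `F(u) = 0`, polarizing the cubic gives
`τ_u(a • u + b • x) = b² • τ_u(x) + (a b (∇F(u)·x)) • u`.
Comparing coefficients in the basis `u, x` yields `c = b²` and `a b (∇F(u)·x) = 0`, so `a = 0`
and `x' = b • x`.
-/

open MvPolynomial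

namespace MvPolynomial

variable {σ R : Type*}

lemma monomial_toFinsupp [CommSemiring R] [DecidableEq σ] (s : Multiset σ) (r : R) :
    monomial (Multiset.toFinsupp s) r = C r * (s.map X).prod := by
  induction s using Multiset.induction_on with
  | empty =>
    rw [Multiset.toFinsupp_zero, ← C_apply, Multiset.map_zero, Multiset.prod_zero, mul_one]
  | cons a s ih =>
    rw [← Multiset.singleton_add, Multiset.toFinsupp_add, Multiset.toFinsupp_singleton,
      monomial_single_add, ih]
    simp only [Multiset.map_add, Multiset.map_singleton, Multiset.prod_add,
      Multiset.prod_singleton, pow_one]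
    ring

variable [Fintype σ]

section CommSemiring

variable [CommSemiring R]

noncomputable def dirDeriv (F : MvPolynomial σ R) (z v : σ → R) : R :=
  ∑ i, eval z (pderiv i F) * v i

@[simp]
lemma dirDeriv_zero (z v : σ → R) : dirDeriv (0 : MvPolynomial σ R) z v = 0 := by
  simp [dirDeriv]

@[simp]
lemma dirDeriv_add (F G : MvPolynomial σ R) (z v : σ → R) :
    dirDeriv (F + G) z v = dirDeriv F z v + dirDeriv G z v := by
  simp [dirDeriv, add_mul, Finset.sum_add_distrib]

@[simp]
lemma dirDeriv_C (r : R) (z v : σ → R) : dirDeriv (C r) z v = 0 := by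
  simp [dirDeriv]

@[simp]
lemma dirDeriv_X (j : σ) (z v : σ → R) : dirDeriv (X j) z v = v j := by
  classical
  simp [dirDeriv, pderiv_X, Pi.single_apply]

@[simp]
lemma dirDeriv_mul (F G : MvPolynomial σ R) (z v : σ → R) :
    dirDeriv (F * G) z v = dirDeriv F z v * eval z G + eval z F * dirDeriv G z v := by
  simp only [dirDeriv, Derivation.leibniz, smul_eq_mul, eval_add, eval_mul, add_mul,
    Finset.sum_add_distrib, Finset.sum_mul, Finset.mul_sum]
  rw [add_comm]
  congr 1 <;> exact Finset.sum_congr rfl fun i _ => by ring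

lemma dirDeriv_smul_add_smul (F : MvPolynomial σ R) (z v w : σ → R) (a b : R) :
    dirDeriv F z (a • v + b • w) = a * dirDeriv F z v + b * dirDeriv F z w := by
  simp only [dirDeriv, Pi.add_apply, Pi.smul_apply, smul_eq_mul, mul_add, Finset.sum_add_distrib,
    Finset.mul_sum]
  congr 1 <;> exact Finset.sum_congr rfl fun i _ => by ring

lemma IsHomogeneous.dirDeriv_self {F : MvPolynomial σ R} {n : ℕ} (hF : F.IsHomogeneous n)
    (v : σ → R) : dirDeriv F v v = n * eval v F := by
  simpa [dirDeriv, mul_comm, nsmul_eq_mul] using congrArg (eval v) hF.sum_X_mul_pderiv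

theorem IsHomogeneous.dirDeriv_smul_add_smul_self {F : MvPolynomial σ R}
    (hF : F.IsHomogeneous 3) (v w : σ → R) (s t : R) :
    dirDeriv F (s • v + t • w) v =
      3 * s ^ 2 * eval v F + 2 * s * t * dirDeriv F v w + t ^ 2 * dirDeriv F w v := by
  classical
  rw [F.as_sum]
  refine Finset.sum_induction _ (fun G => dirDeriv G (s • v + t • w) v =
      3 * s ^ 2 * eval v G + 2 * s * t * dirDeriv G v w + t ^ 2 * dirDeriv G w v)
    (fun G H hG hH => ?_) (by simp) fun d hd => ?_
  · simp only [dirDeriv_add, eval_add, hG, hH]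
    ring
  · have hdeg : Multiset.card (Finsupp.toMultiset d) = 3 := by
      simpa [Finsupp.card_toMultiset, Finsupp.weight_apply, Finsupp.sum]
        using hF (mem_support_iff.mp hd)
    obtain ⟨a, b, c, habc⟩ := Multiset.card_eq_three.mp hdeg
    rw [← Finsupp.toMultiset_toFinsupp d, habc, monomial_toFinsupp]
    simp only [Multiset.insert_eq_cons, Multiset.map_cons, Multiset.map_singleton,
      Multiset.prod_cons, Multiset.prod_singleton, dirDeriv_mul, dirDeriv_C, dirDeriv_X, eval_mul,
      eval_C, eval_X, Pi.add_apply, Pi.smul_apply, smul_eq_mul]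
    ring

end CommSemiring

section CommRing

variable [CommRing R]

/-- The paper's `y(u, x)`, cone coordinates of `τ_u([x])`. -/
noncomputable def tau (F : MvPolynomial σ R) (u x : σ → R) : σ → R :=
  dirDeriv F x u • u - dirDeriv F u x • x

theorem IsHomogeneous.tau_smul_add_smul {F : MvPolynomial σ R} (hF : F.IsHomogeneous 3)
    {u : σ → R} (hu : eval u F = 0) (x : σ → R) (a b : R) :
    tau F u (a • u + b • x) = b ^ 2 • tau F u x + (a * b * dirDeriv F u x) • u := by
  have hA := hF.dirDeriv_smul_add_smul_self u x a b
  have hB : dirDeriv F u (a • u + b • x) = b * dirDeriv F u x := by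
    rw [dirDeriv_smul_add_smul, hF.dirDeriv_self, hu]
    ring
  rw [hu] at hA
  simp only [tau, hA, hB]
  module

end CommRing

lemma exists_eq_smul_add_smul_of_tau_eq_smul {K : Type*} [Field K] {F : MvPolynomial σ K}
    {u x x' : σ → K} (hind : LinearIndependent K ![u, x]) (h1 : dirDeriv F u x ≠ 0) {c : K}
    (hc0 : c ≠ 0) (hτ : tau F u x' = c • tau F u x) :
    ∃ a b : K, x' = a • u + b • x := by
  have hx' : dirDeriv F u x' • x' =
      (dirDeriv F x' u - c * dirDeriv F x u) • u + (c * dirDeriv F u x) • x := by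
    simp only [tau] at hτ
    linear_combination (norm := module) -hτ
  have hB' : dirDeriv F u x' ≠ 0 := by
    intro h0
    rw [h0, zero_smul, eq_comm] at hx'
    exact mul_ne_zero hc0 h1 (LinearIndependent.pair_iff.mp hind _ _ hx').2
  exact ⟨_, _, by rw [← inv_smul_smul₀ hB' x', hx', smul_add, smul_smul, smul_smul]⟩

end MvPolynomial

theorem tau_u_injective_general {K : Type*} [Field K] {m : ℕ}
    (F : MvPolynomial (Fin m) K) (hF : F.IsHomogeneous 3)
    (u x x' : Fin m → K)
    (hu : MvPolynomial.eval u F = 0)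
    (hind : LinearIndependent K ![u, x])
    (h1 : (∑ i, MvPolynomial.eval u (MvPolynomial.pderiv i F) * x i) ≠ 0)
    (hc : ∃ c : K, c ≠ 0 ∧
      (∑ i, MvPolynomial.eval x' (MvPolynomial.pderiv i F) * u i) • u -
          (∑ i, MvPolynomial.eval u (MvPolynomial.pderiv i F) * x' i) • x' =
        c • ((∑ i, MvPolynomial.eval x (MvPolynomial.pderiv i F) * u i) • u -
          (∑ i, MvPolynomial.eval u (MvPolynomial.pderiv i F) * x i) • x)) :
    ∃ d : K, d ≠ 0 ∧ x' = d • x := by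
  obtain ⟨c, hc0, hτ⟩ := hc
  change tau F u x' = c • tau F u x at hτ
  change dirDeriv F u x ≠ 0 at h1
  obtain ⟨a, b, rfl⟩ := exists_eq_smul_add_smul_of_tau_eq_smul hind h1 hc0 hτ
  rw [hF.tau_smul_add_smul hu, tau] at hτ
  obtain ⟨hcu, hcx⟩ := hind.eq_of_pair (s := b ^ 2 * dirDeriv F x u + a * b * dirDeriv F u x)
    (t := -(b ^ 2 * dirDeriv F u x)) (s' := c * dirDeriv F x u) (t' := -(c * dirDeriv F u x))
    (by linear_combination (norm := module) hτ)
  have hbc : b ^ 2 = c := mul_right_cancel₀ h1 (neg_inj.mp hcx)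
  have hb : b ≠ 0 := by
    rintro rfl
    exact hc0 (by simpa using hbc.symm)
  have ha : a = 0 := by
    rw [hbc] at hcu
    simpa [hb, h1] using hcu
  exact ⟨b, hb, by rw [ha, zero_smul, zero_add]⟩

/-- `τ_u` acts injectively on `X ∖ (S_u ∪ S_u*)`: if `τ_u(x)` and `τ_u(x')` agree up to a
nonzero scalar (in cone coordinates), then `x'` is a nonzero scalar multiple of `x`. -/
theorem tau_u_injective {K : Type*} [Field K] [CharZero K] {m : ℕ} (hm : 1 ≤ m)
    (F : MvPolynomial (Fin m) K) (hF : F.IsHomogeneous 3)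
    (u x x' : Fin m → K)
    (hu : MvPolynomial.eval u F = 0) (hx : MvPolynomial.eval x F = 0)
    (hx' : MvPolynomial.eval x' F = 0)
    (hind : LinearIndependent K ![u, x]) (hind' : LinearIndependent K ![u, x'])
    (h1 : (∑ i, MvPolynomial.eval u (MvPolynomial.pderiv i F) * x i) ≠ 0)
    (h2 : (∑ i, MvPolynomial.eval x (MvPolynomial.pderiv i F) * u i) ≠ 0)
    (hc : ∃ c : K, c ≠ 0 ∧
      (∑ i, MvPolynomial.eval x' (MvPolynomial.pderiv i F) * u i) • u -
          (∑ i, MvPolynomial.eval u (MvPolynomial.pderiv i F) * x' i) • x' =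
        c • ((∑ i, MvPolynomial.eval x (MvPolynomial.pderiv i F) * u i) • u -
          (∑ i, MvPolynomial.eval u (MvPolynomial.pderiv i F) * x i) • x)) :
    ∃ d : K, d ≠ 0 ∧ x' = d • x :=
  tau_u_injective_general F hF u x x' hu hind h1 hc
end
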